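/- arXiv:2011.14051 — 3 statements merged into one kernel-verified Lean document; each statement's English description precedes it below -/
import Mathlib

section
/- Let 0 < β < α, ρ = √(α/β), and t > 0. Let M₋ and M₊ be i.i.d. random variables with -M₊ geometric on {0,1,…} with parameter β/α, and let H, A be independent Poisson random variables with means αt, βt, all four variables mutually independent. Then P(M₋ + H - A + M₊ ≤ 0) ≤ (1 + √(β/α))² exp(-(√α - √β)² t). -/
/-!
Chernoff's method with the weight `s = √(β/α) < 1`: on the event `H ≤ A + G₁ + G₂` we have
`1 ≤ s ^ H * s⁻¹ ^ A * s⁻¹ ^ G₁ * s⁻¹ ^ G₂`, so by Markov's inequality and independence the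
probability is at most the product of the generating functions
`E[s ^ H] = exp (α t (s - 1))`, `E[s⁻¹ ^ A] = exp (β t (s⁻¹ - 1))` and `E[s⁻¹ ^ Gᵢ] = 1 + s`.
The choice of `s` balances the two exponentials: `α (s - 1) + β (s⁻¹ - 1) = -(√α - √β)²`.
-/

open MeasureTheory ProbabilityTheory Real
open scoped ENNReal

theorem HasSum.tsum_ofReal_eq {ι : Type*} {f : ι → ℝ} {a : ℝ} (hf : HasSum f a)
    (hf_nonneg : ∀ i, 0 ≤ f i) : ∑' i, ENNReal.ofReal (f i) = ENNReal.ofReal a := by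
  rw [← ENNReal.ofReal_tsum_of_nonneg hf_nonneg hf.summable, hf.tsum_eq]

theorem ENNReal.one_le_pow_mul_inv_pow {s : ℝ≥0∞} (hs0 : s ≠ 0) (hs1 : s ≤ 1) {m n : ℕ}
    (hmn : m ≤ n) : 1 ≤ s ^ m * s⁻¹ ^ n := by
  obtain ⟨d, rfl⟩ := Nat.exists_eq_add_of_le hmn
  rw [pow_add, ← mul_assoc, ← mul_pow,
    ENNReal.mul_inv_cancel hs0 (ne_top_of_le_ne_top ENNReal.one_ne_top hs1), one_pow, one_mul]
  exact one_le_pow₀ (ENNReal.one_le_inv.2 hs1)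

section GeneratingFunctions

variable {Ω : Type*} [MeasurableSpace Ω] {μ : Measure Ω}

theorem lintegral_comp_eq_tsum {α : Type*} [Countable α] [MeasurableSpace α]
    [MeasurableSingletonClass α] {X : Ω → α} (hX : Measurable X) (f : α → ℝ≥0∞) :
    ∫⁻ ω, f (X ω) ∂μ = ∑' a, f a * μ (X ⁻¹' {a}) := by
  rw [← lintegral_map (measurable_of_countable f) hX, lintegral_countable']
  simp only [Measure.map_apply hX (measurableSet_singleton _)]

theorem lintegral_ofReal_pow_eq_tsum {X : Ω → ℕ} (hX : Measurable X) {u : ℝ} (hu : 0 ≤ u)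
    {p : ℕ → ℝ} (hXp : ∀ k, μ {ω | X ω = k} = ENNReal.ofReal (p k)) :
    ∫⁻ ω, ENNReal.ofReal u ^ X ω ∂μ = ∑' k, ENNReal.ofReal (u ^ k * p k) := by
  rw [lintegral_comp_eq_tsum hX]
  congr 1 with k
  rw [← ENNReal.ofReal_pow hu, ENNReal.ofReal_mul (pow_nonneg hu k)]
  exact congrArg _ (hXp k)

theorem lintegral_ofReal_pow_of_poisson {X : Ω → ℕ} (hX : Measurable X) {m u : ℝ}
    (hm : 0 ≤ m) (hu : 0 ≤ u)
    (hXm : ∀ k : ℕ, μ {ω | X ω = k} = ENNReal.ofReal (exp (-m) * m ^ k / k.factorial)) :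
    ∫⁻ ω, ENNReal.ofReal u ^ X ω ∂μ = ENNReal.ofReal (exp (m * (u - 1))) := by
  rw [lintegral_ofReal_pow_eq_tsum hX hu hXm]
  refine HasSum.tsum_ofReal_eq ?_ fun k => by positivity
  have hterm : (fun k : ℕ => u ^ k * (exp (-m) * m ^ k / k.factorial))
      = fun k => exp (-m) * ((m * u) ^ k / k.factorial) := by
    ext k; rw [mul_pow]; ring
  rw [hterm, show m * (u - 1) = -m + m * u by ring, Real.exp_add, Real.exp_eq_exp_ℝ]
  exact (NormedSpace.expSeries_div_hasSum_exp (m * u)).mul_left _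

theorem lintegral_ofReal_pow_of_geometric {X : Ω → ℕ} (hX : Measurable X) {q u : ℝ}
    (hq0 : 0 ≤ q) (hq1 : q ≤ 1) (hu : 0 ≤ u) (hqu : q * u < 1)
    (hXq : ∀ k : ℕ, μ {ω | X ω = k} = ENNReal.ofReal ((1 - q) * q ^ k)) :
    ∫⁻ ω, ENNReal.ofReal u ^ X ω ∂μ = ENNReal.ofReal ((1 - q) / (1 - q * u)) := by
  have h1q : 0 ≤ 1 - q := sub_nonneg.2 hq1
  rw [lintegral_ofReal_pow_eq_tsum hX hu hXq]
  refine HasSum.tsum_ofReal_eq ?_ fun k => by positivity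
  have hterm : (fun k : ℕ => u ^ k * ((1 - q) * q ^ k)) = fun k => (1 - q) * (q * u) ^ k := by
    ext k; rw [mul_pow]; ring
  rw [hterm, div_eq_mul_inv]
  exact (hasSum_geometric_of_lt_one (by positivity) hqu).mul_left _

theorem lintegral_ofReal_inv_pow_of_geometric_sq {X : Ω → ℕ} (hX : Measurable X) {s : ℝ}
    (hs0 : 0 < s) (hs1 : s < 1)
    (hXs : ∀ k : ℕ, μ {ω | X ω = k} = ENNReal.ofReal ((1 - s ^ 2) * (s ^ 2) ^ k)) :
    ∫⁻ ω, ENNReal.ofReal s⁻¹ ^ X ω ∂μ = ENNReal.ofReal (1 + s) := by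
  have hss : s ^ 2 * s⁻¹ = s := by rw [pow_two, mul_inv_cancel_right₀ hs0.ne']
  rw [lintegral_ofReal_pow_of_geometric hX (by positivity) (by nlinarith) (by positivity)
    (hss.symm ▸ hs1) hXs, hss, show 1 - s ^ 2 = (1 + s) * (1 - s) by ring,
    mul_div_cancel_right₀ _ (by linarith)]

theorem measure_setOf_le_le_lintegral_pow_mul_inv_pow {X Y : Ω → ℕ} (hX : Measurable X)
    (hY : Measurable Y) {s : ℝ≥0∞} (hs0 : s ≠ 0) (hs1 : s ≤ 1) :
    μ {ω | X ω ≤ Y ω} ≤ ∫⁻ ω, s ^ X ω * s⁻¹ ^ Y ω ∂μ :=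
  meas_le_lintegral₀ (by fun_prop) fun _ hω => ENNReal.one_le_pow_mul_inv_pow hs0 hs1 hω

theorem ProbabilityTheory.iIndepFun.lintegral_prod_pow {ι : Type*} {X : ι → Ω → ℕ}
    (hX : iIndepFun X μ) (hXm : ∀ i, Measurable (X i)) (w : ι → ℝ≥0∞) (s : Finset ι) :
    ∫⁻ ω, ∏ i ∈ s, w i ^ X i ω ∂μ = ∏ i ∈ s, ∫⁻ ω, w i ^ X i ω ∂μ :=
  lintegral_prod_eq_prod_lintegral_of_indepFun s _
    (hX.comp (fun i k => w i ^ k) fun _ => measurable_of_countable _)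
    fun i => (measurable_of_countable _).comp (hXm i)

end GeneratingFunctions

theorem mul_sqrt_div_sub_one_add_mul_inv_sub_one {α β : ℝ} (hα : 0 < α) (hβ : 0 < β) :
    α * (√(β / α) - 1) + β * ((√(β / α))⁻¹ - 1) = -(√α - √β) ^ 2 := by
  have ha := Real.sqrt_pos.2 hα
  have hb := Real.sqrt_pos.2 hβ
  rw [Real.sqrt_div hβ.le, inv_div]
  field_simp
  linear_combination
    (√β * (√α - √β)) * Real.sq_sqrt hα.le + (√α * (√β - √α)) * Real.sq_sqrt hβ.le

theorem zero_delay_chernoff_general {Ω : Type*} [MeasureSpace Ω]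
    (α β t : ℝ) (hβ : 0 < β) (hβα : β < α) (ht : 0 < t)
    (H A G₁ G₂ : Ω → ℕ)
    (hHm : Measurable H) (hAm : Measurable A) (hG₁m : Measurable G₁) (hG₂m : Measurable G₂)
    (hind : iIndepFun ![H, A, G₁, G₂] ℙ)
    (hH : ∀ k : ℕ, ℙ {ω | H ω = k} = ENNReal.ofReal (exp (-(α * t)) * (α * t) ^ k / k.factorial))
    (hA : ∀ k : ℕ, ℙ {ω | A ω = k} = ENNReal.ofReal (exp (-(β * t)) * (β * t) ^ k / k.factorial))
    (hG₁ : ∀ k : ℕ, ℙ {ω | G₁ ω = k} = ENNReal.ofReal ((1 - β / α) * (β / α) ^ k))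
    (hG₂ : ∀ k : ℕ, ℙ {ω | G₂ ω = k} = ENNReal.ofReal ((1 - β / α) * (β / α) ^ k)) :
    (ℙ {ω | -(G₁ ω : ℤ) + H ω - A ω + -(G₂ ω : ℤ) ≤ 0}).toReal ≤
      (1 + Real.sqrt (β / α)) ^ 2 * exp (-(Real.sqrt α - Real.sqrt β) ^ 2 * t) := by
  have hα : 0 < α := hβ.trans hβα
  have hq : 0 < β / α := div_pos hβ hα
  set s := √(β / α)
  have hs0 : 0 < s := Real.sqrt_pos.2 hq
  have hs1 : s < 1 := (Real.sqrt_lt' one_pos).2 (by rw [one_pow]; exact (div_lt_one hα).2 hβα)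
  rw [← Real.sq_sqrt hq.le] at hG₁ hG₂
  set w := ENNReal.ofReal s
  have hevent : {ω | -(G₁ ω : ℤ) + H ω - A ω + -(G₂ ω : ℤ) ≤ 0}
      = {ω | H ω ≤ A ω + G₁ ω + G₂ ω} := by
    ext ω; simp only [Set.mem_ofPred_eq]; omega
  have hchernoff : ℙ {ω | H ω ≤ A ω + G₁ ω + G₂ ω}
      ≤ ∫⁻ ω, w ^ H ω * w⁻¹ ^ A ω * w⁻¹ ^ G₁ ω * w⁻¹ ^ G₂ ω := by
    simpa only [pow_add, ← mul_assoc] using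
      measure_setOf_le_le_lintegral_pow_mul_inv_pow (μ := ℙ) (Y := fun ω => A ω + G₁ ω + G₂ ω)
        hHm (by fun_prop) (ENNReal.ofReal_pos.2 hs0).ne' (ENNReal.ofReal_le_one.2 hs1.le)
  have hfactor := hind.lintegral_prod_pow (fun i => by fin_cases i <;> assumption)
    ![w, w⁻¹, w⁻¹, w⁻¹] Finset.univ
  simp only [Fin.prod_univ_four, Matrix.cons_val] at hfactor
  have hexp : α * t * (s - 1) + β * t * (s⁻¹ - 1) = -(√α - √β) ^ 2 * t := by
    linear_combination t * mul_sqrt_div_sub_one_add_mul_inv_sub_one hα hβ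
  rw [hevent]
  refine ENNReal.toReal_le_of_le_ofReal (by positivity) (hchernoff.trans_eq ?_)
  rw [hfactor, ← ENNReal.ofReal_inv_of_pos hs0,
    lintegral_ofReal_pow_of_poisson hHm (by positivity) hs0.le hH,
    lintegral_ofReal_pow_of_poisson hAm (by positivity) (by positivity) hA,
    lintegral_ofReal_inv_pow_of_geometric_sq hG₁m hs0 hs1 hG₁,
    lintegral_ofReal_inv_pow_of_geometric_sq hG₂m hs0 hs1 hG₂,
    ← ENNReal.ofReal_mul (by positivity), ← ENNReal.ofReal_mul (by positivity),
    ← ENNReal.ofReal_mul (by positivity), ← hexp, Real.exp_add]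
  ring_nf

/-- Chernoff bound for the zero-delay race.  With `G₁ = -M₋`, `G₂ = -M₊`
i.i.d. geometric with parameter `β/α`, and `H ~ Poisson(αt)`, `A ~ Poisson(βt)`, all
mutually independent,
`P(M₋ + H - A + M₊ ≤ 0) ≤ (1 + √(β/α))² exp(-(√α - √β)² t)`. -/
theorem zero_delay_chernoff {Ω : Type*} [MeasureSpace Ω]
    [IsProbabilityMeasure (ℙ : Measure Ω)]
    (α β t : ℝ) (hβ : 0 < β) (hβα : β < α) (ht : 0 < t)
    (H A G₁ G₂ : Ω → ℕ)
    (hHm : Measurable H) (hAm : Measurable A) (hG₁m : Measurable G₁) (hG₂m : Measurable G₂)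
    (hind : iIndepFun ![H, A, G₁, G₂] ℙ)
    (hH : ∀ k : ℕ, ℙ {ω | H ω = k} = ENNReal.ofReal (exp (-(α * t)) * (α * t) ^ k / k.factorial))
    (hA : ∀ k : ℕ, ℙ {ω | A ω = k} = ENNReal.ofReal (exp (-(β * t)) * (β * t) ^ k / k.factorial))
    (hG₁ : ∀ k : ℕ, ℙ {ω | G₁ ω = k} = ENNReal.ofReal ((1 - β / α) * (β / α) ^ k))
    (hG₂ : ∀ k : ℕ, ℙ {ω | G₂ ω = k} = ENNReal.ofReal ((1 - β / α) * (β / α) ^ k)) :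
    (ℙ {ω | -(G₁ ω : ℤ) + H ω - A ω + -(G₂ ω : ℤ) ≤ 0}).toReal ≤
      (1 + Real.sqrt (β / α)) ^ 2 * exp (-(Real.sqrt α - Real.sqrt β) ^ 2 * t) :=
  zero_delay_chernoff_general α β t hβ hβα ht H A G₁ G₂ hHm hAm hG₁m hG₂m hind hH hA hG₁ hG₂
end

section
/- Define g_α(u) = u² - αu - αu e^{u-α} + α² e^{2(u-α)} for α > 0. Then g_α(u) > 0 for all u ≤ 0, g_α(α) = 0, and there exists a smallest positive zero u₀ of g_α with 0 < u₀ ≤ α. -/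
open Real

/-- properties of `g_α(u) = u² - αu - αu e^{u-α} + α² e^{2(u-α)}`:
positive on `(-∞, 0]`, vanishes at `α`, and has a smallest positive zero `u₀ ∈ (0, α]`. -/
theorem g_alpha_smallest_zero (α : ℝ) (hα : 0 < α)
    (g : ℝ → ℝ)
    (hg : ∀ u, g u = u ^ 2 - α * u - α * u * exp (u - α) + α ^ 2 * exp (2 * (u - α))) :
    (∀ u : ℝ, u ≤ 0 → 0 < g u) ∧ g α = 0 ∧
      ∃ u₀ : ℝ, 0 < u₀ ∧ u₀ ≤ α ∧ g u₀ = 0 ∧ ∀ u : ℝ, 0 < u → u < u₀ → g u ≠ 0 := by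
  have hgc : Continuous g := by
    have h : g = fun u => u ^ 2 - α * u - α * u * exp (u - α) + α ^ 2 * exp (2 * (u - α)) :=
      funext hg
    rw [h]; continuity
  have hga : g α = 0 := by rw [hg]; simp; ring
  have hpos : ∀ u : ℝ, u ≤ 0 → 0 < g u := by
    intro u hu
    rw [hg]
    have e1 := (exp_pos (u - α)).le
    have e2 := exp_pos (2 * (u - α))
    nlinarith [sq_nonneg u, mul_nonneg (mul_nonneg hα.le (neg_nonneg.2 hu)) e1,
      mul_pos (pow_pos hα 2) e2, mul_nonneg hα.le (neg_nonneg.2 hu)]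
  refine ⟨hpos, hga, ?_⟩
  set Z : Set ℝ := Set.Icc 0 α ∩ g ⁻¹' {0} with hZ
  have hZne : Z.Nonempty := ⟨α, ⟨hα.le, le_refl α⟩, hga⟩
  have hZclosed : IsClosed Z := isClosed_Icc.inter (isClosed_singleton.preimage hgc)
  have hZbdd : BddBelow Z := ⟨0, fun u hu => hu.1.1⟩
  set u₀ := sInf Z with hu₀
  have hmem : u₀ ∈ Z := hZclosed.csInf_mem hZne hZbdd
  have h0 : (0 : ℝ) ∉ Z := by
    intro h
    have := h.2
    simp only [Set.mem_preimage, Set.mem_singleton_iff] at this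
    exact absurd this (ne_of_gt (hpos 0 le_rfl))
  have hu₀pos : 0 < u₀ := lt_of_le_of_ne hmem.1.1 (fun h => h0 (h ▸ hmem))
  refine ⟨u₀, hu₀pos, hmem.1.2, hmem.2, ?_⟩
  intro u hu hlt hgu
  have huZ : u ∈ Z := ⟨⟨hu.le, hlt.le.trans hmem.1.2⟩, hgu⟩
  exact absurd (csInf_le hZbdd huZ) (not_le.2 hlt)
end

section
/- Let φ(u) = 1 + (αu - u²)/g_α(u) with g_α(u) = u² - αu - αu e^{u-α} + α² e^{2(u-α)}, and define ψ(u) = u + β - βφ(u). If 0 < β < α e^{-2α}, then ψ'(0) = 1 - β e^{2α}/α > 0, and there exists u* ∈ (0, u₀) such that ψ(u) > 0 for all u ∈ (0, u*], where u₀ is the smallest positive zero of g_α. -/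
open Real Filter Topology Set

/-!
The numerator `αu - u²` of `φ - 1` vanishes at `0` while `g_α(0) = α² e^{-2α} > 0`, so
`ψ'(0) = 1 - β α / g_α(0) = 1 - β e^{2α} / α`, which is positive exactly when
`β < α e^{-2α}`. Since also `ψ(0) = 0`, a positive derivative forces `ψ > 0` on a right
neighbourhood of `0`, and `u*` is taken inside it and below `u₀`.
-/

theorem HasDerivAt.div_of_left_eq_zero {𝕜 : Type*} [NontriviallyNormedField 𝕜]
    {f g : 𝕜 → 𝕜} {f' x : 𝕜} (hf : HasDerivAt f f' x) (hg : DifferentiableAt 𝕜 g x)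
    (hfx : f x = 0) (hgx : g x ≠ 0) :
    HasDerivAt (fun y => f y / g y) (f' / g x) x :=
  (hf.div hg.hasDerivAt hgx).congr_deriv <| by
    rw [hfx, zero_mul, sub_zero, sq, mul_div_mul_right _ _ hgx]

theorem HasDerivAt.eventually_pos_nhdsGT {f : ℝ → ℝ} {f' x : ℝ} (hf : HasDerivAt f f' x)
    (hfx : f x = 0) (hf' : 0 < f') : ∀ᶠ u in 𝓝[>] x, 0 < f u := by
  have hslope : ∀ᶠ u in 𝓝[>] x, 0 < slope f x u :=
    ((hasDerivAt_iff_tendsto_slope.mp hf).mono_left (nhdsGT_le_nhdsNE x)).eventually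
      (eventually_gt_nhds hf')
  filter_upwards [hslope, self_mem_nhdsWithin] with u hu hxu
  rw [slope_def_field, hfx, sub_zero] at hu
  exact (div_pos_iff_of_pos_right (sub_pos.mpr hxu)).mp hu

theorem div_mul_exp_neg_two_mul {α : ℝ} (hα : α ≠ 0) :
    α / (α ^ 2 * exp (-2 * α)) = exp (2 * α) / α := by
  rw [show -2 * α = -(2 * α) by ring, exp_neg]
  field_simp

theorem mul_exp_two_mul_div_lt_one {α β : ℝ} (hα : 0 < α) (hβα : β < α * exp (-2 * α)) :
    β * exp (2 * α) / α < 1 := by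
  rw [div_lt_one hα, ← lt_div_iff₀ (exp_pos _), div_eq_mul_inv, ← exp_neg]
  simpa only [neg_mul] using hβα

theorem exponent_positive_general (α β : ℝ) (hα : 0 < α)
    (hβα : β < α * exp (-2 * α))
    (g φ ψ : ℝ → ℝ)
    (hg : ∀ u, g u = u ^ 2 - α * u - α * u * exp (u - α) + α ^ 2 * exp (2 * (u - α)))
    (hφ : ∀ u, φ u = 1 + (α * u - u ^ 2) / g u)
    (hψ : ∀ u, ψ u = u + β - β * φ u)
    (u₀ : ℝ) (hu₀pos : 0 < u₀) :
    deriv ψ 0 = 1 - β * exp (2 * α) / α ∧ 0 < 1 - β * exp (2 * α) / α ∧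
      ∃ ustar : ℝ, 0 < ustar ∧ ustar < u₀ ∧
        ∀ u : ℝ, 0 < u → u ≤ ustar → 0 < ψ u := by
  have hg0 : g 0 = α ^ 2 * exp (-2 * α) := by rw [hg]; ring_nf
  have hgdiff : DifferentiableAt ℝ g 0 := by rw [funext hg]; fun_prop
  have hnum : HasDerivAt (fun u => α * u - u ^ 2) α 0 :=
    (((hasDerivAt_id' 0).const_mul α).sub (hasDerivAt_pow 2 (0 : ℝ))).congr_deriv (by simp)
  have hquot := hnum.div_of_left_eq_zero hgdiff (by simp) (by rw [hg0]; positivity)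
  have hψ' : HasDerivAt ψ (1 - β * exp (2 * α) / α) 0 := by
    rw [hg0, div_mul_exp_neg_two_mul hα.ne'] at hquot
    rw [funext fun u => (hψ u).trans (by rw [hφ])]
    exact (((hasDerivAt_id' 0).add_const β).sub ((hquot.const_add 1).const_mul β)).congr_deriv
      (by rw [mul_div_assoc])
  have hpos : 0 < 1 - β * exp (2 * α) / α := sub_pos.mpr (mul_exp_two_mul_div_lt_one hα hβα)
  have hψ0 : ψ 0 = 0 := by simp [hψ, hφ]
  obtain ⟨ε, hε, hsub⟩ :=
    mem_nhdsGT_iff_exists_Ioc_subset.mp (hψ'.eventually_pos_nhdsGT hψ0 hpos)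
  refine ⟨hψ'.deriv, hpos, min ε (u₀ / 2), lt_min hε (half_pos hu₀pos),
    (min_le_right _ _).trans_lt (half_lt_self hu₀pos), fun u hu hle => ?_⟩
  exact hsub ⟨hu, hle.trans (min_le_left _ _)⟩

/-- with `φ(u) = 1 + (αu - u²)/g_α(u)` and `ψ(u) = u + β - βφ(u)`,
if `0 < β < α e^{-2α}` then `ψ'(0) = 1 - β e^{2α}/α > 0` and there exists
`u* ∈ (0, u₀)` with `ψ(u) > 0` for all `u ∈ (0, u*]`, where `u₀` is the smallest
positive zero of `g_α`. -/
theorem exponent_positive (α β : ℝ) (hα : 0 < α) (hβ : 0 < β)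
    (hβα : β < α * exp (-2 * α))
    (g φ ψ : ℝ → ℝ)
    (hg : ∀ u, g u = u ^ 2 - α * u - α * u * exp (u - α) + α ^ 2 * exp (2 * (u - α)))
    (hφ : ∀ u, φ u = 1 + (α * u - u ^ 2) / g u)
    (hψ : ∀ u, ψ u = u + β - β * φ u)
    (u₀ : ℝ) (hu₀pos : 0 < u₀) (hu₀zero : g u₀ = 0)
    (hu₀min : ∀ u : ℝ, 0 < u → u < u₀ → g u ≠ 0) :
    deriv ψ 0 = 1 - β * exp (2 * α) / α ∧ 0 < 1 - β * exp (2 * α) / α ∧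
      ∃ ustar : ℝ, 0 < ustar ∧ ustar < u₀ ∧
        ∀ u : ℝ, 0 < u → u ≤ ustar → 0 < ψ u :=
  exponent_positive_general α β hα hβα g φ ψ hg hφ hψ u₀ hu₀pos
end
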